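/- arXiv:1109.3928 — 7 statements merged into one kernel-verified Lean document; each statement's English description precedes it below -/
import Mathlib

section
/- For n ≡ 0 (mod 4) and m ≡ 0 (mod 4) with n, m ≥ 4, the total domination number and the paired domination number of the toroidal mesh C_n × C_m both equal nm/4. -/
open SimpleGraph

/-- The toroidal mesh `C_n × C_m`: Cartesian product of two cycles, with
vertex set `ZMod n × ZMod m`. -/
def torusGraph (n m : ℕ) : SimpleGraph (ZMod n × ZMod m) where
  Adj a b := a ≠ b ∧ ((a.1 = b.1 ∧ (a.2 = b.2 + 1 ∨ b.2 = a.2 + 1)) ∨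
    (a.2 = b.2 ∧ (a.1 = b.1 + 1 ∨ b.1 = a.1 + 1)))
  symm := by
    constructor
    intro a b h
    obtain ⟨hne, h⟩ := h
    refine ⟨hne.symm, ?_⟩
    rcases h with ⟨h1, h2⟩ | ⟨h1, h2⟩
    · exact Or.inl ⟨h1.symm, h2.symm⟩
    · exact Or.inr ⟨h1.symm, h2.symm⟩
  loopless := by constructor; intro a h; exact h.1 rfl

/-- `D` is a total dominating set of `G`: every vertex has a neighbor in `D`. -/
def IsTotalDomSet {V : Type*} (G : SimpleGraph V) (D : Set V) : Prop :=
  ∀ v : V, ∃ u ∈ D, G.Adj v u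

/-- `D` is a dominating set of `G`: every vertex outside `D` has a neighbor in `D`. -/
def IsDomSet {V : Type*} (G : SimpleGraph V) (D : Set V) : Prop :=
  ∀ v : V, v ∉ D → ∃ u ∈ D, G.Adj v u

/-- `D` is a paired dominating set: a dominating set whose induced subgraph
has a perfect matching. -/
def IsPairedDomSet {V : Type*} (G : SimpleGraph V) (D : Set V) : Prop :=
  IsDomSet G D ∧ ∃ M : (G.induce D).Subgraph, M.IsPerfectMatching

/-- The total domination number. -/
noncomputable def totalDomNum {V : Type*} (G : SimpleGraph V) : ℕ :=
  sInf {k | ∃ D : Set V, IsTotalDomSet G D ∧ D.ncard = k}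

/-- The paired domination number. -/
noncomputable def pairedDomNum {V : Type*} (G : SimpleGraph V) : ℕ :=
  sInf {k | ∃ D : Set V, IsPairedDomSet G D ∧ D.ncard = k}

/-- The domination number. -/
noncomputable def domNum {V : Type*} (G : SimpleGraph V) : ℕ :=
  sInf {k | ∃ D : Set V, IsDomSet G D ∧ D.ncard = k}

/-!
Every vertex of the 4-regular torus totally dominates only its four neighbours, so a total
dominating set has at least `nm/4` vertices. When `4 ∣ n` and `4 ∣ m`, the vertices whose
coordinates reduce mod 4 into `{(0,0), (1,0), (2,2), (3,2)}` form an efficient open dominating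
set (a total perfect code): every vertex has exactly one neighbour in it. This is checked on
`C₄ × C₄` and pulled back along the reduction map, which is bijective on neighbourhoods. Such a
set in a `k`-regular graph has exactly `|V|/k` vertices, and it induces a perfect matching, so it
is also paired dominating.
-/

open SimpleGraph Finset

def IsEfficientOpenDomSet {V : Type*} (G : SimpleGraph V) (D : Set V) : Prop :=
  ∀ v, ∃! u, u ∈ D ∧ G.Adj v u

section General

variable {V : Type*} {G : SimpleGraph V} {D : Set V}

theorem IsPairedDomSet.isTotalDomSet (hD : IsPairedDomSet G D) : IsTotalDomSet G D := by
  obtain ⟨hdom, M, hM, hspan⟩ := hD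
  intro v
  by_cases hv : v ∈ D
  · obtain ⟨w, hw, -⟩ := hM (hspan ⟨v, hv⟩)
    exact ⟨w, w.2, M.adj_sub hw⟩
  · exact hdom v hv

namespace IsEfficientOpenDomSet

theorem isTotalDomSet (hD : IsEfficientOpenDomSet G D) : IsTotalDomSet G D :=
  fun v => (hD v).exists

theorem isPairedDomSet (hD : IsEfficientOpenDomSet G D) : IsPairedDomSet G D := by
  refine ⟨fun v _ => hD.isTotalDomSet v, ⊤, Subgraph.isPerfectMatching_iff.mpr ?_⟩
  rintro ⟨v, hv⟩
  obtain ⟨u, ⟨huD, hvu⟩, huniq⟩ := hD v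
  exact ⟨⟨u, huD⟩, hvu, fun w hw => Subtype.ext (huniq w ⟨w.2, hw⟩)⟩

theorem preimage {W : Type*} {H : SimpleGraph W} {D : Set W} (hD : IsEfficientOpenDomSet H D)
    (f : V → W) (hf : ∀ v, Set.BijOn f (G.neighborSet v) (H.neighborSet (f v))) :
    IsEfficientOpenDomSet G (f ⁻¹' D) := by
  intro v
  obtain ⟨w, ⟨hwD, hvw⟩, hwuniq⟩ := hD (f v)
  obtain ⟨u, hvu, rfl⟩ := (hf v).surjOn hvw
  refine ⟨u, ⟨hwD, hvu⟩, fun u' ⟨hu'D, hvu'⟩ => (hf v).injOn hvu' hvu ?_⟩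
  exact hwuniq _ ⟨hu'D, (hf v).mapsTo hvu'⟩

end IsEfficientOpenDomSet

variable [Fintype V] [DecidableRel G.Adj]

theorem IsTotalDomSet.card_le_mul_ncard {k : ℕ} (hdeg : ∀ v, G.degree v ≤ k)
    (hD : IsTotalDomSet G D) : Fintype.card V ≤ k * D.ncard := by
  classical
  have hcover : (univ : Finset V) ⊆ D.toFinset.biUnion fun u => G.neighborFinset u := by
    intro v _
    obtain ⟨u, hu, hvu⟩ := hD v
    simpa using ⟨u, hu, hvu.symm⟩
  calc Fintype.card V ≤ #(D.toFinset.biUnion fun u => G.neighborFinset u) := card_le_card hcover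
    _ ≤ ∑ u ∈ D.toFinset, G.degree u := card_biUnion_le
    _ ≤ #D.toFinset * k := sum_le_card_nsmul _ _ _ fun u _ => hdeg u
    _ = k * D.ncard := by rw [Set.ncard_eq_toFinset_card', mul_comm]

theorem IsEfficientOpenDomSet.card_eq_mul_ncard {k : ℕ} (hreg : G.IsRegularOfDegree k)
    (hD : IsEfficientOpenDomSet G D) : Fintype.card V = k * D.ncard := by
  classical
  have hcover : D.toFinset.biUnion (fun u => G.neighborFinset u) = univ := by
    refine eq_univ_of_forall fun v => ?_
    obtain ⟨u, ⟨hu, hvu⟩, -⟩ := hD v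
    simpa using ⟨u, hu, hvu.symm⟩
  have hdisj : (D.toFinset : Set V).PairwiseDisjoint fun u => G.neighborFinset u := by
    intro u hu u' hu' hne
    refine disjoint_left.mpr fun v hvu hvu' => hne ?_
    simp only [Set.coe_toFinset, mem_neighborFinset] at hu hu' hvu hvu'
    exact (hD v).unique ⟨hu, hvu.symm⟩ ⟨hu', hvu'.symm⟩
  calc Fintype.card V = ∑ u ∈ D.toFinset, G.degree u := by
        rw [← card_univ, ← hcover, card_biUnion hdisj]; rfl
    _ = k * D.ncard := by
        rw [sum_congr rfl fun u _ => hreg u, sum_const, smul_eq_mul, Set.ncard_eq_toFinset_card',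
          mul_comm]

theorem IsEfficientOpenDomSet.ncard_le_of_isTotalDomSet {k : ℕ} (hreg : G.IsRegularOfDegree k)
    (hD : IsEfficientOpenDomSet G D) {D' : Set V} (hD' : IsTotalDomSet G D') :
    D.ncard ≤ D'.ncard := by
  have h := (hD.card_eq_mul_ncard hreg).symm.trans_le (hD'.card_le_mul_ncard fun v => (hreg v).le)
  rcases k.eq_zero_or_pos with rfl | hk
  · have : IsEmpty V := Fintype.card_eq_zero_iff.mp (by simpa using hD.card_eq_mul_ncard hreg)
    simp [Set.eq_empty_of_isEmpty D]
  · exact Nat.le_of_mul_le_mul_left h hk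

theorem IsEfficientOpenDomSet.totalDomNum_eq {k : ℕ} (hreg : G.IsRegularOfDegree k)
    (hD : IsEfficientOpenDomSet G D) : totalDomNum G = D.ncard :=
  le_antisymm (Nat.sInf_le ⟨D, hD.isTotalDomSet, rfl⟩) <|
    le_csInf ⟨_, D, hD.isTotalDomSet, rfl⟩ fun _ ⟨_, hD', hcard⟩ =>
      hcard ▸ hD.ncard_le_of_isTotalDomSet hreg hD'

theorem IsEfficientOpenDomSet.pairedDomNum_eq {k : ℕ} (hreg : G.IsRegularOfDegree k)
    (hD : IsEfficientOpenDomSet G D) : pairedDomNum G = D.ncard :=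
  le_antisymm (Nat.sInf_le ⟨D, hD.isPairedDomSet, rfl⟩) <|
    le_csInf ⟨_, D, hD.isPairedDomSet, rfl⟩ fun _ ⟨_, hD', hcard⟩ =>
      hcard ▸ hD.ncard_le_of_isTotalDomSet hreg hD'.isTotalDomSet

end General

instance (n m : ℕ) : DecidableRel (torusGraph n m).Adj := fun a b => by
  unfold torusGraph; infer_instance

def torusDir (n m : ℕ) : Fin 4 → ZMod n × ZMod m := ![(1, 0), (-1, 0), (0, 1), (0, -1)]

theorem torusDir_injective {n m : ℕ} (hn : 2 < n) (hm : 2 < m) :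
    Function.Injective (torusDir n m) := by
  have : Fact (2 < n) := ⟨hn⟩
  have : Fact (2 < m) := ⟨hm⟩
  have : Fact (1 < n) := ⟨by omega⟩
  have : Fact (1 < m) := ⟨by omega⟩
  have h1 : (-1 : ZMod n) ≠ 1 := ZMod.neg_one_ne_one
  have h2 : (-1 : ZMod m) ≠ 1 := ZMod.neg_one_ne_one
  intro i j h
  fin_cases i <;> fin_cases j <;> simp_all [torusDir, Prod.ext_iff, eq_comm]

theorem torusGraph_adj_iff {n m : ℕ} [Nontrivial (ZMod n)] [Nontrivial (ZMod m)]
    {v u : ZMod n × ZMod m} :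
    (torusGraph n m).Adj v u ↔ ∃ i, u = v + torusDir n m i := by
  obtain ⟨v1, v2⟩ := v
  obtain ⟨u1, u2⟩ := u
  simp only [torusGraph, ne_eq, Prod.mk.injEq, not_and, torusDir, Fin.exists_fin_succ, Fin.isValue,
    Matrix.cons_val_zero, Prod.mk_add_mk, add_zero, Matrix.cons_val_succ, Matrix.cons_val_fin_one,
    exists_const]
  constructor
  · rintro ⟨-, ⟨rfl, rfl | rfl⟩ | ⟨rfl, rfl | rfl⟩⟩ <;> simp
  · rintro (⟨rfl, rfl⟩ | ⟨rfl, rfl⟩ | ⟨rfl, rfl⟩ | ⟨rfl, rfl⟩) <;> simp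

theorem torusGraph_neighborSet {n m : ℕ} [Nontrivial (ZMod n)] [Nontrivial (ZMod m)]
    (v : ZMod n × ZMod m) : (torusGraph n m).neighborSet v = Set.range (v + torusDir n m ·) := by
  ext u
  simp only [mem_neighborSet, torusGraph_adj_iff, Set.mem_range, eq_comm]

theorem torusGraph_isRegularOfDegree {n m : ℕ} [NeZero n] [NeZero m] (hn : 2 < n) (hm : 2 < m) :
    (torusGraph n m).IsRegularOfDegree 4 := by
  have : Fact (1 < n) := ⟨by omega⟩
  have : Fact (1 < m) := ⟨by omega⟩
  intro v
  have hinj : Function.Injective (v + torusDir n m ·) :=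
    (add_right_injective v).comp (torusDir_injective hn hm)
  rw [← card_neighborSet_eq_degree, ← Nat.card_eq_fintype_card, torusGraph_neighborSet,
    Nat.card_range_of_injective hinj, Nat.card_eq_fintype_card, Fintype.card_fin]

def torusCover {a b n m : ℕ} (ha : a ∣ n) (hb : b ∣ m) :
    ZMod n × ZMod m →+* ZMod a × ZMod b :=
  (ZMod.castHom ha (ZMod a)).prodMap (ZMod.castHom hb (ZMod b))

theorem torusCover_torusDir {a b n m : ℕ} (ha : a ∣ n) (hb : b ∣ m) (i : Fin 4) :
    torusCover ha hb (torusDir n m i) = torusDir a b i := by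
  fin_cases i <;>
    simp [torusCover, torusDir, ZMod.cast_one ha, ZMod.cast_one hb, ZMod.cast_neg ha,
      ZMod.cast_neg hb]

theorem bijOn_torusCover {a b n m : ℕ} [Nontrivial (ZMod n)] [Nontrivial (ZMod m)]
    (ha : a ∣ n) (hb : b ∣ m) (ha' : 2 < a) (hb' : 2 < b) (v : ZMod n × ZMod m) :
    Set.BijOn (torusCover ha hb) ((torusGraph n m).neighborSet v)
      ((torusGraph a b).neighborSet (torusCover ha hb v)) := by
  have : Fact (1 < a) := ⟨by omega⟩
  have : Fact (1 < b) := ⟨by omega⟩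
  have hdir := torusDir_injective ha' hb'
  rw [torusGraph_neighborSet, torusGraph_neighborSet]
  refine ⟨?_, ?_, ?_⟩
  · rintro _ ⟨i, rfl⟩
    exact ⟨i, by simp [torusCover_torusDir]⟩
  · rintro _ ⟨i, rfl⟩ _ ⟨j, rfl⟩ h
    simp only [map_add, torusCover_torusDir, add_right_inj] at h
    rw [hdir h]
  · rintro _ ⟨i, rfl⟩
    exact ⟨v + torusDir n m i, ⟨i, rfl⟩, by simp [torusCover_torusDir]⟩

def torusPattern : Finset (ZMod 4 × ZMod 4) := {(0, 0), (1, 0), (2, 2), (3, 2)}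

theorem isEfficientOpenDomSet_torusPattern :
    IsEfficientOpenDomSet (torusGraph 4 4) torusPattern := by
  unfold IsEfficientOpenDomSet ExistsUnique
  decide

theorem stmt2 (n m : ℕ) (hn : 4 ≤ n) (hm : 4 ≤ m) (h1 : n % 4 = 0) (h2 : m % 4 = 0) :
    totalDomNum (torusGraph n m) = n * m / 4 ∧
    pairedDomNum (torusGraph n m) = n * m / 4 := by
  have : Fact (1 < n) := ⟨by omega⟩
  have : Fact (1 < m) := ⟨by omega⟩
  have hD := isEfficientOpenDomSet_torusPattern.preimage _ <|
    bijOn_torusCover (Nat.dvd_of_mod_eq_zero h1) (Nat.dvd_of_mod_eq_zero h2) (by norm_num)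
      (by norm_num)
  have hreg := torusGraph_isRegularOfDegree (n := n) (m := m) (by omega) (by omega)
  have hcard := hD.card_eq_mul_ncard hreg
  rw [Fintype.card_prod, ZMod.card, ZMod.card] at hcard
  rw [hD.totalDomNum_eq hreg, hD.pairedDomNum_eq hreg]
  omega
end

section
/- For all n ≥ 3, the total domination number of the toroidal mesh C_n × C_3 equals ⌈4n/5⌉. -/
open SimpleGraph

/-!
Write `D` column by column, `f i = {ρ | (i, ρ) ∈ D}`. Since `C_3` is complete, `D` is total
dominating iff for every column `i` and row `ρ`, either `ρ ∈ f (i - 1) ∪ f (i + 1)` or `f i`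
contains a row other than `ρ`. For the column sizes `a i = #(f i)` this forces
`a (i - 1) + a (i + 1) ≥ 3` when `a i = 0` and `≥ 1` when `a i = 1`.

Lower bound by discharging: column `i` starts with charge `5 a i - 4`, and every nonempty column
of size `x` sends `share x = 1, 3, 4` (for `x = 1, 2, ≥ 3`) to each empty neighbour. An empty
column receives at least `4` because its neighbours have total size `≥ 3`, and a column of size `1`
has at most one empty neighbour, so every final charge is nonnegative and `5 ∑ a ≥ 4 n`.

Upper bound: repeat the columns `{0}, {0}, ∅, {1, 2}, ∅`, with one extra vertex when `n ≡ 3 (mod 5)`.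
-/

open Finset

def share : ℕ → ℕ
  | 0 => 0
  | 1 => 1
  | 2 => 3
  | _ => 4

def transfer (x y : ℕ) : ℕ := if y = 0 then share x else 0

lemma four_add_transfer_le {a b c : ℕ} (h₀ : b = 0 → 3 ≤ a + c) (h₁ : b = 1 → 1 ≤ a + c) :
    4 + transfer b a + transfer b c ≤ 5 * b + transfer a b + transfer c b := by
  unfold transfer
  rcases b with _ | _ | _ | b <;>
    rcases a with _ | _ | _ | a <;> rcases c with _ | _ | _ | c <;> simp_all [share] <;> omega

theorem four_mul_le_five_mul_sum {n : ℕ} [NeZero n] (a : ZMod n → ℕ)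
    (h₀ : ∀ i, a i = 0 → 3 ≤ a (i - 1) + a (i + 1))
    (h₁ : ∀ i, a i = 1 → 1 ≤ a (i - 1) + a (i + 1)) :
    4 * n ≤ 5 * ∑ i, a i := by
  have hlocal : ∑ i, (4 + transfer (a i) (a (i - 1)) + transfer (a i) (a (i + 1))) ≤
      ∑ i, (5 * a i + transfer (a (i - 1)) (a i) + transfer (a (i + 1)) (a i)) :=
    sum_le_sum fun i _ => four_add_transfer_le (h₀ i) (h₁ i)
  have hshift : ∀ g : ZMod n → ℕ, ∑ i, g (i + 1) = ∑ i, g i := fun g =>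
    Equiv.sum_comp (Equiv.addRight 1) g
  have hleft := hshift fun i => transfer (a i) (a (i - 1))
  have hright := hshift fun i => transfer (a (i - 1)) (a i)
  simp only [add_sub_cancel_right] at hleft hright
  simp only [sum_add_distrib, ← mul_sum, sum_const, card_univ, ZMod.card, smul_eq_mul] at hlocal
  omega

def CoversColumn (L M R : Finset (ZMod 3)) : Prop :=
  ∀ ρ, ρ ∈ L ∨ ρ ∈ R ∨ ∃ σ ∈ M, σ ≠ ρ

namespace CoversColumn

variable {L M R : Finset (ZMod 3)}

lemma three_le_card_add_card (h : CoversColumn L M R) (hM : #M = 0) : 3 ≤ #L + #R := by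
  have hcover : univ ⊆ L ∪ R := fun ρ _ => by
    rcases h ρ with hL | hR | ⟨σ, hσ, -⟩
    · exact mem_union_left R hL
    · exact mem_union_right L hR
    · exact absurd hσ (by simp_all)
  calc 3 = #(univ : Finset (ZMod 3)) := rfl
    _ ≤ #(L ∪ R) := card_le_card hcover
    _ ≤ #L + #R := card_union_le L R

lemma one_le_card_add_card (h : CoversColumn L M R) (hM : #M = 1) : 1 ≤ #L + #R := by
  obtain ⟨σ, rfl⟩ := card_eq_one.mp hM
  rcases h σ with hL | hR | ⟨τ, hτ, hne⟩
  · have := card_pos.mpr ⟨σ, hL⟩; omega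
  · have := card_pos.mpr ⟨σ, hR⟩; omega
  · exact absurd (mem_singleton.mp hτ) hne

end CoversColumn

lemma ncard_setOf_snd_mem {α β : Type*} [Fintype α] [Fintype β]
    (f : α → Finset β) : {p : α × β | p.2 ∈ f p.1}.ncard = ∑ a, #(f a) := by
  classical
  have hset : {p : α × β | p.2 ∈ f p.1} = ↑(univ.filter fun p : α × β => p.2 ∈ f p.1) := by
    ext; simp
  rw [hset, Set.ncard_coe_finset, card_filter, Fintype.sum_prod_type]
  exact sum_congr rfl fun a _ => by simp

lemma torusGraph_three_adj_iff {n : ℕ} (hn : n ≠ 1) (i j : ZMod n) (ρ σ : ZMod 3) :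
    (torusGraph n 3).Adj (i, ρ) (j, σ) ↔
      (j = i - 1 ∧ σ = ρ) ∨ (j = i + 1 ∧ σ = ρ) ∨ (j = i ∧ σ ≠ ρ) := by
  have : Nontrivial (ZMod n) := ZMod.nontrivial_iff.mpr hn
  have hrows : ∀ τ : ZMod 3, (ρ = τ + 1 ∨ τ = ρ + 1) ↔ τ ≠ ρ := by revert ρ; decide
  simp only [torusGraph, ne_eq, Prod.mk.injEq, hrows]
  constructor
  · rintro ⟨-, ⟨rfl, hσ⟩ | ⟨rfl, rfl | rfl⟩⟩
    · exact Or.inr (Or.inr ⟨rfl, hσ⟩)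
    · exact Or.inl ⟨by ring, rfl⟩
    · exact Or.inr (Or.inl ⟨rfl, rfl⟩)
  · rintro (⟨rfl, rfl⟩ | ⟨rfl, rfl⟩ | ⟨rfl, hσ⟩)
    · exact ⟨fun h => one_ne_zero (by linear_combination h.1), Or.inr ⟨rfl, Or.inl (by ring)⟩⟩
    · exact ⟨fun h => one_ne_zero (by linear_combination -h.1), Or.inr ⟨rfl, Or.inr rfl⟩⟩
    · exact ⟨by tauto, Or.inl ⟨rfl, hσ⟩⟩

lemma isTotalDomSet_torusGraph_three_iff {n : ℕ} (hn : n ≠ 1) (f : ZMod n → Finset (ZMod 3)) :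
    IsTotalDomSet (torusGraph n 3) {p | p.2 ∈ f p.1} ↔
      ∀ i, CoversColumn (f (i - 1)) (f i) (f (i + 1)) := by
  simp only [IsTotalDomSet, CoversColumn, Prod.forall, Prod.exists, Set.mem_ofPred_eq,
    torusGraph_three_adj_iff hn]
  refine forall_congr' fun i => forall_congr' fun ρ => ⟨?_, ?_⟩
  · rintro ⟨j, σ, hσ, ⟨rfl, rfl⟩ | ⟨rfl, rfl⟩ | ⟨rfl, hne⟩⟩
    exacts [Or.inl hσ, Or.inr (Or.inl hσ), Or.inr (Or.inr ⟨σ, hσ, hne⟩)]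
  · rintro (hL | hR | ⟨σ, hσ, hne⟩)
    exacts [⟨_, _, hL, Or.inl ⟨rfl, rfl⟩⟩, ⟨_, _, hR, Or.inr (Or.inl ⟨rfl, rfl⟩)⟩,
      ⟨_, _, hσ, Or.inr (Or.inr ⟨rfl, hne⟩)⟩]

theorem four_mul_le_five_mul_ncard {n : ℕ} [NeZero n] (hn : n ≠ 1) {D : Set (ZMod n × ZMod 3)}
    (hD : IsTotalDomSet (torusGraph n 3) D) : 4 * n ≤ 5 * D.ncard := by
  classical
  set f : ZMod n → Finset (ZMod 3) := fun i => univ.filter fun ρ => (i, ρ) ∈ D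
  have hDf : D = {p | p.2 ∈ f p.1} := by ext; simp [f]
  rw [hDf] at hD ⊢
  have hcover := (isTotalDomSet_torusGraph_three_iff hn f).mp hD
  rw [ncard_setOf_snd_mem]
  exact four_mul_le_five_mul_sum (fun i => #(f i))
    (fun i => (hcover i).three_le_card_add_card) (fun i => (hcover i).one_le_card_add_card)

lemma ZMod.val_add_one_eq_ite {n : ℕ} [NeZero n] (hn : n ≠ 1) (i : ZMod n) :
    (i + 1).val = if i.val + 1 = n then 0 else i.val + 1 := by
  have hi := i.val_lt
  rw [ZMod.val_add, ZMod.val_one_eq_one_mod, Nat.mod_eq_of_lt (by omega : 1 < n)]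
  split_ifs with h
  · rw [h, Nat.mod_self]
  · exact Nat.mod_eq_of_lt (by omega)

lemma ZMod.val_sub_one_eq_ite {n : ℕ} [NeZero n] (hn : n ≠ 1) (i : ZMod n) :
    (i - 1).val = if i.val = 0 then n - 1 else i.val - 1 := by
  have h := ZMod.val_add_one_eq_ite hn (i - 1)
  have hi := (i - 1).val_lt
  rw [sub_add_cancel] at h
  split_ifs at h ⊢ <;> omega

/-- When `n ≡ 3 (mod 5)` the last column, whose neighbours are both `{0}`, must be `{0}`
rather than `∅`. -/
def pattern (n k : ℕ) : Finset (ZMod 3) :=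
  if k % 5 = 3 then {1, 2} else if k % 5 = 4 ∨ (k % 5 = 2 ∧ k + 1 < n) then ∅ else {0}

lemma coversColumn_pattern {n k : ℕ} (hn : 2 ≤ n) (hk : k < n) :
    CoversColumn (pattern n (if k = 0 then n - 1 else k - 1)) (pattern n k)
      (pattern n (if k + 1 = n then 0 else k + 1)) := by
  split_ifs
  all_goals
    unfold pattern CoversColumn
    split_ifs <;> first | omega | decide | simp_all

lemma card_pattern (n k : ℕ) :
    #(pattern n k) =
      if k % 5 = 3 then 2 else if k % 5 = 4 ∨ (k % 5 = 2 ∧ k + 1 < n) then 0 else 1 := by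
  unfold pattern
  split_ifs <;> rfl

lemma sum_range_card_pattern {n m : ℕ} (hm : m ≤ n) :
    ∑ k ∈ range m, #(pattern n k) + (if m % 5 = 3 ∧ m < n then 1 else 0) = (4 * m + 4) / 5 := by
  induction m with
  | zero => simp
  | succ m ih =>
    have := ih (by omega)
    rw [sum_range_succ, card_pattern]
    obtain ⟨q, r, hr, rfl⟩ : ∃ q r, r < 5 ∧ m = 5 * q + r :=
      ⟨m / 5, m % 5, Nat.mod_lt m (by norm_num), (Nat.div_add_mod m 5).symm⟩
    interval_cases r <;> split_ifs at this ⊢ <;> omega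

theorem isTotalDomSet_pattern {n : ℕ} [NeZero n] (hn : 2 ≤ n) :
    IsTotalDomSet (torusGraph n 3) {p | p.2 ∈ pattern n p.1.val} := by
  refine (isTotalDomSet_torusGraph_three_iff (by omega) fun i => pattern n i.val).mpr fun i => ?_
  rw [ZMod.val_sub_one_eq_ite (by omega), ZMod.val_add_one_eq_ite (by omega)]
  exact coversColumn_pattern hn i.val_lt

theorem ncard_pattern {n : ℕ} [NeZero n] :
    {p : ZMod n × ZMod 3 | p.2 ∈ pattern n p.1.val}.ncard = (4 * n + 4) / 5 := by
  have hsum := sum_range_card_pattern (n := n) le_rfl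
  simp only [lt_irrefl, and_false, if_false, add_zero] at hsum
  rw [ncard_setOf_snd_mem (fun i : ZMod n => pattern n i.val), ← hsum]
  obtain ⟨m, rfl⟩ : ∃ m, n = m + 1 := ⟨n - 1, by have := NeZero.ne n; omega⟩
  exact Fin.sum_univ_eq_sum_range (fun k => #(pattern (m + 1) k)) (m + 1)

theorem stmt3 (n : ℕ) (hn : 3 ≤ n) :
    totalDomNum (torusGraph n 3) = (4 * n + 4) / 5 := by
  have : NeZero n := ⟨by omega⟩
  refine IsLeast.csInf_eq ⟨⟨_, isTotalDomSet_pattern (by omega), ncard_pattern⟩, ?_⟩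
  rintro k ⟨D, hD, rfl⟩
  have := four_mul_le_five_mul_ncard (by omega) hD
  omega
end

section
/- For all n ≥ 3, the paired domination number of C_n × C_3 equals ⌈4n/5⌉ if n ≡ 0, 2, or 4 (mod 5), and equals ⌈4n/5⌉ + 1 if n ≡ 1 or 3 (mod 5). -/
open SimpleGraph

/-!
Write `S_i ⊆ ZMod 3` for the rows that a paired dominating set `D` occupies in column `i`.
An empty column must have its three rows covered by its two neighbouring columns, and the
partner of the vertex of a one-vertex column lies in a neighbouring column, in the same row.
Under these constraints a potential `φ(S_{i-1}, S_i)` satisfies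
`φ(S_i, S_{i+1}) - φ(S_{i-1}, S_i) ≤ 5 |S_{i+1}| - 4`, which telescopes around the cycle to
`4n ≤ 5 |D|`. As `|D|` is even, `|D| ≥ 2 ⌈2n/5⌉ = 2 ((2n + 4) / 5)`, which is `⌈4n/5⌉` or
`⌈4n/5⌉ + 1` according to `n mod 5`.

Conversely, the columns `{0,1}, ∅, {2}, {2}, ∅` repeated (the two vertices of `{0,1}` paired
with each other, the two vertices in row `2` paired horizontally), followed by a short tail
depending on `n mod 5`, give a paired dominating set of exactly that size.
-/

open Finset

theorem ncard_setOf_mem_fiber {α β : Type*} [Fintype α] (S : α → Finset β) :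
    {p : α × β | p.2 ∈ S p.1}.ncard = ∑ a, (S a).card := by
  rw [← Nat.card_coe_set_eq]
  exact (Nat.card_congr (Equiv.subtypeProdEquivSigmaSubtype fun a b => b ∈ S a)).trans
    (by simp)

theorem sum_zmod_val_eq_sum_range {M : Type*} [AddCommMonoid M] {n : ℕ} [NeZero n]
    (f : ℕ → M) : ∑ i : ZMod n, f i.val = ∑ a ∈ range n, f a := by
  obtain ⟨k, rfl⟩ := Nat.exists_eq_succ_of_ne_zero (NeZero.ne n)
  exact Fin.sum_univ_eq_sum_range f _

theorem sum_zmod_getD_eq_sum_map {α M : Type*} [AddCommMonoid M] (w : List α) (d : α)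
    (f : α → M) {n : ℕ} [NeZero n] (hn : w.length = n) :
    ∑ i : ZMod n, f (w.getD i.val d) = (w.map f).sum := by
  rw [sum_zmod_val_eq_sum_range fun a => f (w.getD a d), ← hn, sum_range,
    ← Fin.sum_univ_fun_getElem]
  simp

theorem List.getD_append_of_le {α : Type*} {u v : List α} {d : α} (hv : v.getD 0 d = d)
    {k : ℕ} (hk : k ≤ u.length) : (u ++ v).getD k d = u.getD k d := by
  rcases hk.lt_or_eq with hk | rfl
  · exact getD_append _ _ _ _ hk
  · rw [getD_append_right _ _ _ _ le_rfl, Nat.sub_self, hv, getD_eq_default _ _ le_rfl]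

theorem val_sub_one_of_val_ne_zero {n : ℕ} [NeZero n] {i : ZMod n} (hi : i.val ≠ 0) :
    (i - 1).val = i.val - 1 := by
  have h1 : (1 : ZMod n).val = 1 := by
    rw [ZMod.val_one_eq_one_mod, Nat.mod_eq_of_lt (by have := ZMod.val_lt i; omega)]
  rw [ZMod.val_sub (by omega), h1]

theorem IsPairedDomSet.even_ncard {V : Type*} [Finite V] {G : SimpleGraph V} {D : Set V}
    (hD : IsPairedDomSet G D) : Even D.ncard := by
  obtain ⟨M, hM⟩ := hD.2
  have := Fintype.ofFinite D
  rw [← Nat.card_coe_set_eq, Nat.card_eq_fintype_card]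
  exact hM.even_card

theorem exists_isPerfectMatching_induce_of_involution {V : Type*} {G : SimpleGraph V}
    {D : Set V} (μ : V → V) (hμ : ∀ v ∈ D, μ v ∈ D ∧ G.Adj v (μ v) ∧ μ (μ v) = v) :
    ∃ M : (G.induce D).Subgraph, M.IsPerfectMatching := by
  let partner : D → D := fun v => ⟨μ v, (hμ v v.2).1⟩
  have hpartner : ∀ v, partner (partner v) = v := fun v => Subtype.ext (hμ v v.2).2.2
  refine ⟨{ verts := Set.univ
            Adj := fun v w => partner v = w
            adj_sub := ?_
            edge_vert := fun _ => Set.mem_univ _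
            symm := ⟨fun v w h => by rw [← h, hpartner]⟩ }, ?_, fun _ => Set.mem_univ _⟩
  · rintro v _ rfl
    exact (hμ v v.2).2.1
  · exact fun v _ => ⟨partner v, rfl, fun _ h => Eq.symm h⟩

namespace torusGraph

theorem adj_iff_of_ne {n m : ℕ} {i k : ZMod n} {j l : ZMod m} (h : i ≠ k) :
    (torusGraph n m).Adj (i, j) (k, l) ↔ j = l ∧ (i = k + 1 ∨ k = i + 1) := by
  simp [torusGraph, h]

theorem adj_sub_one {n m : ℕ} [Fact (1 < n)] (i : ZMod n) (j : ZMod m) :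
    (torusGraph n m).Adj (i, j) (i - 1, j) :=
  (adj_iff_of_ne (by simp [eq_sub_iff_add_eq])).2 ⟨rfl, Or.inl (sub_add_cancel i 1).symm⟩

theorem adj_add_one {n m : ℕ} [Fact (1 < n)] (i : ZMod n) (j : ZMod m) :
    (torusGraph n m).Adj (i, j) (i + 1, j) :=
  (adj_iff_of_ne (by simp)).2 ⟨rfl, Or.inr rfl⟩

noncomputable def column {α β : Type*} [Finite β] (D : Set (α × β)) (a : α) : Finset β :=
  (Set.toFinite {b | (a, b) ∈ D}).toFinset

theorem mem_column {α β : Type*} [Finite β] {D : Set (α × β)} {a : α} {b : β} :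
    b ∈ column D a ↔ (a, b) ∈ D :=
  Set.Finite.mem_toFinset _

theorem setOf_mem_column {α β : Type*} [Finite β] (D : Set (α × β)) :
    {p : α × β | p.2 ∈ column D p.1} = D := by
  ext; simp [mem_column]

theorem mem_column_sub_one_or_add_one {n m : ℕ} [NeZero m] {D : Set (ZMod n × ZMod m)}
    {i k : ZMod n} {j l : ZMod m} (hu : (k, l) ∈ D) (hadj : (torusGraph n m).Adj (i, j) (k, l))
    (hne : k ≠ i) : j ∈ column D (i - 1) ∪ column D (i + 1) := by
  obtain ⟨rfl, rfl | rfl⟩ := (adj_iff_of_ne hne.symm).1 hadj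
  · exact mem_union_left _ (mem_column.2 (by rwa [add_sub_cancel_right]))
  · exact mem_union_right _ (mem_column.2 hu)

def ColumnConstraint (A B C : Finset (ZMod 3)) : Prop :=
  (B = ∅ → A ∪ C = univ) ∧ ∀ r, B = {r} → r ∈ A ∪ C

instance (A B C : Finset (ZMod 3)) : Decidable (ColumnConstraint A B C) := by
  unfold ColumnConstraint; infer_instance

theorem _root_.IsPairedDomSet.columnConstraint {n : ℕ} {D : Set (ZMod n × ZMod 3)}
    (hD : IsPairedDomSet (torusGraph n 3) D) (i : ZMod n) :
    ColumnConstraint (column D (i - 1)) (column D i) (column D (i + 1)) := by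
  constructor
  · intro hempty
    refine eq_univ_of_forall fun j => ?_
    have hj : (i, j) ∉ D := fun h => by simpa [hempty] using mem_column.2 h
    obtain ⟨⟨k, l⟩, hu, hadj⟩ := hD.1 _ hj
    refine mem_column_sub_one_or_add_one hu hadj ?_
    rintro rfl
    simpa [hempty] using mem_column.2 hu
  · intro r hsingle
    have hr : (i, r) ∈ D := mem_column.1 (hsingle ▸ mem_singleton_self r)
    obtain ⟨M, hM⟩ := hD.2
    obtain ⟨⟨⟨k, l⟩, hw⟩, hMadj, -⟩ := hM.1 (hM.2 ⟨(i, r), hr⟩)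
    have hadj : (torusGraph n 3).Adj (i, r) (k, l) := M.adj_sub hMadj
    refine mem_column_sub_one_or_add_one hw hadj ?_
    rintro rfl
    have : l ∈ column D k := mem_column.2 hw
    rw [hsingle, mem_singleton] at this
    exact hadj.ne (by rw [this])

def potential (A B : Finset (ZMod 3)) : ℤ :=
  if 2 ≤ B.card then 0
  else if B.card = 1 then
    (if A = ∅ then -3 else if A.card = 1 then (if A = B then -2 else -1) else 0)
  else if A = ∅ then -8 else if A.card = 1 then -6 else -4

theorem potential_sub_potential_le :
    ∀ A B C : Finset (ZMod 3), ColumnConstraint A B C →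
      potential B C - potential A B ≤ 5 * C.card - 4 := by
  decide

theorem four_mul_le_five_mul_sum_card {n : ℕ} [NeZero n] (S : ZMod n → Finset (ZMod 3))
    (hS : ∀ i, ColumnConstraint (S (i - 1)) (S i) (S (i + 1))) :
    4 * n ≤ 5 * ∑ i, (S i).card := by
  have htelescope :
      ∑ i, (potential (S i) (S (i + 1)) - potential (S (i - 1)) (S i)) = 0 := by
    rw [sum_sub_distrib, sub_eq_zero]
    exact Fintype.sum_equiv (Equiv.addRight 1) _ _ fun i => by simp
  have hshift : ∑ i, ((S (i + 1)).card : ℤ) = ∑ i, ((S i).card : ℤ) :=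
    Fintype.sum_equiv (Equiv.addRight 1) _ _ fun _ => rfl
  have : (0 : ℤ) ≤ 5 * ∑ i, ((S i).card : ℤ) - 4 * n :=
    calc (0 : ℤ) = ∑ i, (potential (S i) (S (i + 1)) - potential (S (i - 1)) (S i)) :=
          htelescope.symm
      _ ≤ ∑ i, (5 * ((S (i + 1)).card : ℤ) - 4) :=
          sum_le_sum fun i _ => potential_sub_potential_le _ _ _ (hS i)
      _ = 5 * ∑ i, ((S i).card : ℤ) - 4 * n := by
          simp [sum_sub_distrib, ← mul_sum, hshift, mul_comm]
  exact_mod_cast (by linarith : (4 * n : ℤ) ≤ 5 * ∑ i, ((S i).card : ℤ))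

theorem _root_.IsPairedDomSet.two_mul_le_ncard {n : ℕ} [NeZero n]
    {D : Set (ZMod n × ZMod 3)} (hD : IsPairedDomSet (torusGraph n 3) D) :
    2 * ((2 * n + 4) / 5) ≤ D.ncard := by
  have h5 : 4 * n ≤ 5 * D.ncard := by
    rw [← setOf_mem_column D, ncard_setOf_mem_fiber]
    exact four_mul_le_five_mul_sum_card _ hD.columnConstraint
  obtain ⟨k, hk⟩ := hD.even_ncard
  omega

theorem isDomSet_of_column {n : ℕ} [Fact (1 < n)] (S : ZMod n → Finset (ZMod 3))
    (hS : ∀ i, S i = ∅ → S (i - 1) ∪ S (i + 1) = univ) :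
    IsDomSet (torusGraph n 3) {p | p.2 ∈ S p.1} := by
  rintro ⟨i, j⟩ (hj : j ∉ S i)
  by_cases hempty : S i = ∅
  · rcases mem_union.1 (hS i hempty ▸ mem_univ j) with h | h
    · exact ⟨(i - 1, j), h, adj_sub_one i j⟩
    · exact ⟨(i + 1, j), h, adj_add_one i j⟩
  · obtain ⟨l, hl⟩ := nonempty_iff_ne_empty.2 hempty
    have hne : j ≠ l := by rintro rfl; exact hj hl
    have hcycle : ∀ a b : ZMod 3, a ≠ b → a = b + 1 ∨ b = a + 1 := by decide
    exact ⟨(i, l), hl, fun h => hne (congrArg Prod.snd h), Or.inl ⟨rfl, hcycle j l hne⟩⟩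

end torusGraph

inductive ColumnType
  | pair
  | empty
  | left
  | right
  deriving DecidableEq

namespace ColumnType

def rows : ColumnType → Finset (ZMod 3)
  | pair => {0, 1}
  | empty => ∅
  | left => {2}
  | right => {2}

def partner {n : ℕ} : ColumnType → ZMod n × ZMod 3 → ZMod n × ZMod 3
  | pair, (i, j) => (i, 1 - j)
  | empty, p => p
  | left, (i, j) => (i + 1, j)
  | right, (i, j) => (i - 1, j)

def Fits (a b c : ColumnType) : Prop :=
  (b = empty → a.rows ∪ c.rows = univ) ∧ (b = left → c = right) ∧ (b = right → a = left)

instance (a b c : ColumnType) : Decidable (Fits a b c) := by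
  unfold Fits; infer_instance

theorem fits_pair (a c : ColumnType) : Fits a pair c := by
  simp [Fits]

theorem isPairedDomSet_of_fits {n : ℕ} [Fact (1 < n)] (c : ZMod n → ColumnType)
    (hc : ∀ i, Fits (c (i - 1)) (c i) (c (i + 1))) :
    IsPairedDomSet (torusGraph n 3) {p | p.2 ∈ (c p.1).rows} := by
  refine ⟨torusGraph.isDomSet_of_column (fun i => (c i).rows) fun i hi => (hc i).1 ?_,
    exists_isPerfectMatching_induce_of_involution (fun p => (c p.1).partner p) ?_⟩
  · cases h : c i <;> simp_all [rows]
  · rintro ⟨i, j⟩ (hj : j ∈ (c i).rows)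
    obtain ⟨-, hleft, hright⟩ := hc i
    cases h : c i with
    | pair =>
      have hj01 : j = 0 ∨ j = 1 := by simpa [h, rows] using hj
      rcases hj01 with rfl | rfl <;> simp [partner, h, rows, torusGraph]
    | empty => simp [h, rows] at hj
    | left =>
      obtain rfl : j = 2 := by simpa [h, rows] using hj
      refine ⟨?_, torusGraph.adj_add_one i 2, ?_⟩ <;> simp [partner, hleft h, rows]
    | right =>
      obtain rfl : j = 2 := by simpa [h, rows] using hj
      refine ⟨?_, torusGraph.adj_sub_one i 2, ?_⟩ <;> simp [partner, hright h, rows]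

-- `getD` reads `pair` past the end of the word, so a block is checked as if it were followed by
-- another block; this is what lets blocks be concatenated and closed up into a cycle.
def IsBlock (w : List ColumnType) : Prop :=
  w.getD 0 pair = pair ∧
    ∀ k < w.length, 0 < k → Fits (w.getD (k - 1) pair) (w.getD k pair) (w.getD (k + 1) pair)

instance (w : List ColumnType) : Decidable (IsBlock w) := by
  unfold IsBlock; infer_instance

theorem IsBlock.append {u v : List ColumnType} (hu : IsBlock u) (hv : IsBlock v) :
    IsBlock (u ++ v) := by
  refine ⟨?_, fun k hk hk0 => ?_⟩
  · rw [List.getD_append_of_le hv.1 (Nat.zero_le _), hu.1]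
  rcases lt_trichotomy k u.length with hlt | rfl | hgt
  · rw [List.getD_append_of_le hv.1 (by omega), List.getD_append_of_le hv.1 hlt.le,
      List.getD_append_of_le hv.1 hlt]
    exact hu.2 k hlt hk0
  · rw [List.getD_append_right _ _ _ _ le_rfl, Nat.sub_self, hv.1]
    exact fits_pair _ _
  · have hk' : k - u.length < v.length := by simp only [List.length_append] at hk; omega
    have := hv.2 (k - u.length) hk' (by omega)
    rwa [List.getD_append_right _ _ _ _ (by omega), List.getD_append_right _ _ _ _ hgt.le,
      List.getD_append_right _ _ _ _ (by omega), show k - 1 - u.length = k - u.length - 1 by omega,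
      show k + 1 - u.length = k - u.length + 1 by omega]

theorem IsBlock.flatten_replicate {u : List ColumnType} (hu : IsBlock u) (m : ℕ) :
    IsBlock (List.replicate m u).flatten := by
  induction m with
  | zero => exact ⟨rfl, fun k hk => absurd hk (by simp)⟩
  | succ m ih => simpa [List.replicate_succ] using hu.append ih

theorem getD_val_add_one {w : List ColumnType} {n : ℕ} [NeZero n] (hw : w.getD 0 pair = pair)
    (hn : w.length = n) (i : ZMod n) : w.getD (i + 1).val pair = w.getD (i.val + 1) pair := by
  rw [ZMod.val_add, ZMod.val_one_eq_one_mod, Nat.add_mod_mod]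
  by_cases h : i.val + 1 < n
  · rw [Nat.mod_eq_of_lt h]
  · have : i.val + 1 = n := by have := ZMod.val_lt i; omega
    rw [this, Nat.mod_self, hw, List.getD_eq_default _ _ hn.le]

theorem IsBlock.fits {w : List ColumnType} (hw : IsBlock w) {n : ℕ} [NeZero n]
    (hn : w.length = n) (i : ZMod n) :
    Fits (w.getD (i - 1).val pair) (w.getD i.val pair) (w.getD (i + 1).val pair) := by
  by_cases hi : i.val = 0
  · rw [hi, hw.1]
    exact fits_pair _ _
  rw [val_sub_one_of_val_ne_zero hi, getD_val_add_one hw.1 hn]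
  exact hw.2 i.val (hn ▸ ZMod.val_lt i) (Nat.pos_of_ne_zero hi)

def period : List ColumnType := [pair, empty, left, right, empty]

theorem exists_isBlock_tail (n : ℕ) (hn : 3 ≤ n) :
    ∃ m T, IsBlock T ∧ 5 * m + T.length = n ∧
      4 * m + (T.map fun t => t.rows.card).sum = 2 * ((2 * n + 4) / 5) := by
  have : n % 5 = 0 ∨ n % 5 = 1 ∨ n % 5 = 2 ∨ n % 5 = 3 ∨ n % 5 = 4 := by omega
  rcases this with h | h | h | h | h
  · exact ⟨n / 5, [], by decide, (by omega : 5 * (n / 5) + 0 = n),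
      (by omega : 4 * (n / 5) + 0 = 2 * ((2 * n + 4) / 5))⟩
  · exact ⟨n / 5, [pair], by decide, (by omega : 5 * (n / 5) + 1 = n),
      (by omega : 4 * (n / 5) + 2 = 2 * ((2 * n + 4) / 5))⟩
  · exact ⟨n / 5 - 1, [pair, empty, left, right, left, right, empty], by decide,
      (by omega : 5 * (n / 5 - 1) + 7 = n),
      (by omega : 4 * (n / 5 - 1) + 6 = 2 * ((2 * n + 4) / 5))⟩
  · exact ⟨n / 5, [pair, left, right], by decide, (by omega : 5 * (n / 5) + 3 = n),
      (by omega : 4 * (n / 5) + 4 = 2 * ((2 * n + 4) / 5))⟩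
  · exact ⟨n / 5, [pair, empty, left, right], by decide, (by omega : 5 * (n / 5) + 4 = n),
      (by omega : 4 * (n / 5) + 4 = 2 * ((2 * n + 4) / 5))⟩

theorem exists_isPairedDomSet_ncard_eq (n : ℕ) (hn : 3 ≤ n) :
    ∃ D, IsPairedDomSet (torusGraph n 3) D ∧ D.ncard = 2 * ((2 * n + 4) / 5) := by
  obtain ⟨m, T, hT, hlength, hweight⟩ := exists_isBlock_tail n hn
  set w := (List.replicate m period).flatten ++ T
  have hw : IsBlock w := ((show IsBlock period by decide).flatten_replicate m).append hT
  have hwn : w.length = n := by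
    simp only [w, List.length_append, List.length_flatten, List.map_replicate,
      List.sum_replicate, smul_eq_mul, show period.length = 5 from rfl]
    omega
  have : Fact (1 < n) := ⟨by omega⟩
  refine ⟨_, isPairedDomSet_of_fits (fun i => w.getD i.val pair) (hw.fits hwn), ?_⟩
  have hperiod : (period.map fun t => t.rows.card).sum = 4 := by decide
  rw [ncard_setOf_mem_fiber (fun i : ZMod n => (w.getD i.val pair).rows),
    sum_zmod_getD_eq_sum_map w pair (fun t => t.rows.card) hwn]
  simp only [w, List.map_append, List.map_flatten, List.map_replicate, List.sum_append,
    List.sum_flatten, List.sum_replicate, hperiod, smul_eq_mul]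
  omega

end ColumnType

theorem stmt4 (n : ℕ) (hn : 3 ≤ n) :
    ((n % 5 = 0 ∨ n % 5 = 2 ∨ n % 5 = 4) →
      pairedDomNum (torusGraph n 3) = (4 * n + 4) / 5) ∧
    ((n % 5 = 1 ∨ n % 5 = 3) →
      pairedDomNum (torusGraph n 3) = (4 * n + 4) / 5 + 1) := by
  have : NeZero n := ⟨by omega⟩
  obtain ⟨D, hD, hcard⟩ := ColumnType.exists_isPairedDomSet_ncard_eq n hn
  have hmem : 2 * ((2 * n + 4) / 5) ∈
      {k | ∃ D : Set (ZMod n × ZMod 3), IsPairedDomSet (torusGraph n 3) D ∧ D.ncard = k} :=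
    ⟨D, hD, hcard⟩
  have hvalue : pairedDomNum (torusGraph n 3) = 2 * ((2 * n + 4) / 5) :=
    le_antisymm (Nat.sInf_le hmem)
      (le_csInf ⟨_, hmem⟩ fun _ ⟨D, hD, hk⟩ => hk ▸ hD.two_mul_le_ncard)
  constructor <;> intro <;> omega
end

section
/- For n ≡ 2 (mod 4) with n ≥ 6, the paired domination number of C_n × C_4 is at most n + 2. -/
open SimpleGraph

open Function

/-
Cover the even columns `0, 2, …, n - 2` of `C_n × C_4` by vertical dominoes, alternately in rows
`{0, 1}` and `{2, 3}`. Inside a column carrying a domino every vertex has a vertical neighbour in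
it, and a vertex of an odd column `i < n - 1` sits between two columns whose dominoes lie in
different row halves, so it has a horizontal neighbour in one of them. Only column `n - 1` is left
over (for `n ≡ 2 mod 4` both of its neighbouring columns carry rows `{0, 1}`); one more domino in
it gives a paired dominating set of `n / 2 + 1` dominoes, i.e. `n + 2` vertices.
-/

theorem IsTotalDomSet.isDomSet {V : Type*} {G : SimpleGraph V} {D : Set V}
    (hD : IsTotalDomSet G D) : IsDomSet G D :=
  fun v _ => hD v

theorem pairedDomNum_le_ncard {V : Type*} {G : SimpleGraph V} {D : Set V}
    (hD : IsPairedDomSet G D) : pairedDomNum G ≤ D.ncard :=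
  Nat.sInf_le ⟨D, hD, rfl⟩

theorem exists_isPerfectMatching_induce_range {ι V : Type*} (G : SimpleGraph V) {p : ι → V}
    (hp : Injective p) {σ : ι → ι} (hσ : Involutive σ) (hadj : ∀ i, G.Adj (p i) (p (σ i))) :
    ∃ M : (G.induce (Set.range p)).Subgraph, M.IsPerfectMatching := by
  let M : (G.induce (Set.range p)).Subgraph :=
    { verts := Set.univ
      Adj := fun x y => ∃ i, x.1 = p i ∧ y.1 = p (σ i)
      adj_sub := by
        rintro x y ⟨i, hx, hy⟩
        rw [induce_adj, hx, hy]
        exact hadj i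
      edge_vert := fun _ => trivial
      symm := ⟨fun x y ⟨i, hx, hy⟩ => ⟨σ i, hy, by rw [hσ i, hx]⟩⟩ }
  refine ⟨M, Subgraph.isPerfectMatching_iff.mpr ?_⟩
  rintro ⟨_, i, rfl⟩
  refine ⟨⟨p (σ i), Set.mem_range_self _⟩, ⟨i, rfl, rfl⟩, ?_⟩
  rintro y ⟨i', hi', hy⟩
  obtain rfl := hp hi'
  exact Subtype.ext hy

section Torus

variable {n m : ℕ}

theorem torusGraph_adj_of_fst [Nontrivial (ZMod n)] {a a' : ZMod n} (b : ZMod m)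
    (h : a = a' + 1 ∨ a' = a + 1) : (torusGraph n m).Adj (a, b) (a', b) := by
  refine ⟨fun hab => ?_, Or.inr ⟨rfl, h⟩⟩
  obtain rfl : a = a' := congrArg Prod.fst hab
  rcases h with h | h <;> simp at h

theorem torusGraph_adj_of_snd [Nontrivial (ZMod m)] (a : ZMod n) {b b' : ZMod m}
    (h : b = b' + 1 ∨ b' = b + 1) : (torusGraph n m).Adj (a, b) (a, b') := by
  refine ⟨fun hab => ?_, Or.inl ⟨rfl, h⟩⟩
  obtain rfl : b = b' := congrArg Prod.snd hab
  rcases h with h | h <;> simp at h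

theorem torusGraph_exists_adj_rows_two_mul_add (a : ZMod n) (b : ZMod 4) {t : ℕ} (ht : t < 2) :
    ∃ e < 2, (torusGraph n 4).Adj (a, b) (a, ((2 * t + e : ℕ) : ZMod 4)) := by
  have : Fact (1 < 4) := ⟨by norm_num⟩
  have key : ∀ b : ZMod 4, ∀ t < 2, ∃ e < 2,
      b = ((2 * t + e : ℕ) : ZMod 4) + 1 ∨ ((2 * t + e : ℕ) : ZMod 4) = b + 1 := by
    decide
  obtain ⟨e, he, hadj⟩ := key b t ht
  exact ⟨e, he, torusGraph_adj_of_snd a hadj⟩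

/-- The `min` puts the last domino, `j = n / 2`, in column `n - 1`. -/
def torusDomino (n : ℕ) (x : Fin (n / 2 + 1) × Fin 2) : ZMod n × ZMod 4 :=
  (((min (2 * x.1.val) (n - 1) : ℕ) : ZMod n), ((2 * (x.1.val % 2) + x.2.val : ℕ) : ZMod 4))

theorem torusDomino_injective (hn : Even n) [NeZero n] : Injective (torusDomino n) := by
  rintro ⟨⟨j, hj⟩, ⟨e, he⟩⟩ ⟨⟨j', hj'⟩, ⟨e', he'⟩⟩ h
  simp only [torusDomino, Prod.mk.injEq, ZMod.natCast_eq_natCast_iff'] at h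
  obtain ⟨hcol, hrow⟩ := h
  have hpos := NeZero.pos n
  have hn2 := Nat.even_iff.mp hn
  rw [Nat.mod_eq_of_lt (by omega), Nat.mod_eq_of_lt (by omega)] at hcol
  obtain rfl : j = j' := by omega
  obtain rfl : e = e' := by omega
  rfl

theorem torusDomino_adj_swap (x : Fin (n / 2 + 1) × Fin 2) :
    (torusGraph n 4).Adj (torusDomino n x) (torusDomino n (x.1, x.2.rev)) := by
  have : Fact (1 < 4) := ⟨by norm_num⟩
  obtain ⟨j, e⟩ := x
  apply torusGraph_adj_of_snd
  fin_cases e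
  · right; simp [Fin.rev]
  · left; simp [Fin.rev]

theorem isTotalDomSet_range_torusDomino (hn : Even n) [NeZero n] :
    IsTotalDomSet (torusGraph n 4) (Set.range (torusDomino n)) := by
  have hn2 := Nat.even_iff.mp hn
  have hpos := NeZero.pos n
  have : Nontrivial (ZMod n) := ZMod.nontrivial_iff.mpr (by omega)
  rintro ⟨a, b⟩
  obtain ⟨i, hi, rfl⟩ : ∃ i < n, (i : ZMod n) = a := ⟨a.val, a.val_lt, ZMod.natCast_zmod_val a⟩
  by_cases hcol : i % 2 = 0 ∨ i = n - 1
  · obtain ⟨e, he, hadj⟩ :=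
      torusGraph_exists_adj_rows_two_mul_add (i : ZMod n) b (Nat.mod_lt ((i + 1) / 2) two_pos)
    refine ⟨torusDomino n (⟨(i + 1) / 2, by omega⟩, ⟨e, he⟩), Set.mem_range_self _, ?_⟩
    have hmin : min (2 * ((i + 1) / 2)) (n - 1) = i := by omega
    simpa [torusDomino, hmin] using hadj
  · obtain ⟨j, hj, hnbr, hpar⟩ : ∃ j ≤ n / 2,
        (min (2 * j) (n - 1) + 1 = i ∨ min (2 * j) (n - 1) = i + 1) ∧ j % 2 = b.val / 2 := by
      have hb := b.val_lt
      by_cases hpar : i / 2 % 2 = b.val / 2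
      · exact ⟨i / 2, by omega, by omega, hpar⟩
      · exact ⟨i / 2 + 1, by omega, by omega, by omega⟩
    refine ⟨torusDomino n (⟨j, by omega⟩, ⟨b.val % 2, Nat.mod_lt _ two_pos⟩),
      Set.mem_range_self _, ?_⟩
    have hrow : ((2 * (j % 2) + b.val % 2 : ℕ) : ZMod 4) = b := by
      rw [hpar, Nat.div_add_mod, ZMod.natCast_zmod_val]
    simp only [torusDomino, hrow]
    apply torusGraph_adj_of_fst
    rcases hnbr with h | h
    · left; rw [← h]; push_cast; rfl
    · right; rw [h]; push_cast; rfl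

theorem isPairedDomSet_range_torusDomino (hn : Even n) [NeZero n] :
    IsPairedDomSet (torusGraph n 4) (Set.range (torusDomino n)) :=
  ⟨(isTotalDomSet_range_torusDomino hn).isDomSet,
    exists_isPerfectMatching_induce_range _ (torusDomino_injective hn)
      (σ := Prod.map id Fin.rev) (fun _ => Prod.ext rfl (Fin.rev_rev _)) torusDomino_adj_swap⟩

theorem ncard_range_torusDomino (hn : Even n) [NeZero n] :
    (Set.range (torusDomino n)).ncard = n + 2 := by
  rw [Set.ncard_range_of_injective (torusDomino_injective hn), Nat.card_eq_fintype_card,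
    Fintype.card_prod, Fintype.card_fin, Fintype.card_fin]
  obtain ⟨k, rfl⟩ := hn
  omega

end Torus

theorem stmt6_general (n : ℕ) (h : n % 4 = 2) :
    pairedDomNum (torusGraph n 4) ≤ n + 2 := by
  have hn : Even n := Nat.even_iff.mpr (by omega)
  have : NeZero n := ⟨by omega⟩
  simpa only [ncard_range_torusDomino hn] using
    pairedDomNum_le_ncard (isPairedDomSet_range_torusDomino hn)

theorem stmt6 (n : ℕ) (hn : 6 ≤ n) (h : n % 4 = 2) :
    pairedDomNum (torusGraph n 4) ≤ n + 2 :=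
  stmt6_general n h
end

section
/- Let D be a total dominating set of C_n × C_4 with n ≥ 5, and for each i (mod n) let Y_i = {x_{ij} : 1 ≤ j ≤ 4} be the i-th column and H_i^4 = Y_i ∪ Y_{i+1} ∪ Y_{i+2} ∪ Y_{i+3}. Then |D ∩ H_i^4| ≥ 4 for every i. -/
/-!
Split each column of `C_n × C_4` into two half-columns according to the parity of the row.
The two rows `r` and `r + 2` of a half-column have the same vertical neighbours `r ± 1`, so a
half-column in column `k` is totally dominated either by a vertex of the other half of column `k`
or by two distinct vertices of the same parity in columns `k ± 1`. For the four half-columns of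
the columns `i + 1` and `i + 2` this gives four disjunctive linear constraints on the eight
half-column counts of the window `H_i^4`, and they force the sum of these counts to be at least 4.
-/

open SimpleGraph

lemma Set.ncard_sep_or_of_disjoint {α : Type*} [Finite α] (D : Set α) {P Q : α → Prop}
    (hPQ : ∀ v, P v → ¬ Q v) :
    {v ∈ D | P v ∨ Q v}.ncard = {v ∈ D | P v}.ncard + {v ∈ D | Q v}.ncard := by
  rw [Set.sep_or]
  exact Set.ncard_union_eq (Set.disjoint_left.2 fun v hP hQ => hPQ v hP.2 hQ.2)

lemma torusGraph_adj_mk_cases {n m : ℕ} {k : ZMod n} {s : ZMod m} {u : ZMod n × ZMod m}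
    (h : (torusGraph n m).Adj (k, s) u) :
    (u.1 = k ∧ (u.2 = s + 1 ∨ u.2 = s - 1)) ∨ (u.2 = s ∧ (u.1 = k - 1 ∨ u.1 = k + 1)) := by
  obtain ⟨-, ⟨hk, hs | hs⟩ | ⟨hs, hk | hk⟩⟩ := h
  · exact .inl ⟨hk.symm, .inr (eq_sub_of_add_eq hs.symm)⟩
  · exact .inl ⟨hk.symm, .inl hs⟩
  · exact .inr ⟨hs.symm, .inl (eq_sub_of_add_eq hk.symm)⟩
  · exact .inr ⟨hs.symm, .inr hk⟩

def rowParity : ZMod 4 →+* ZMod 2 := ZMod.castHom (by norm_num) (ZMod 2)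

lemma rowParity_add_one (s : ZMod 4) : rowParity (s + 1) = rowParity s + 1 := by
  rw [map_add, map_one]

lemma rowParity_sub_one (s : ZMod 4) : rowParity (s - 1) = rowParity s + 1 := by
  rw [map_sub, map_one, CharTwo.sub_eq_add]

lemma IsTotalDomSet.exists_torus_dominator {n : ℕ} {D : Set (ZMod n × ZMod 4)}
    (hD : IsTotalDomSet (torusGraph n 4) D) (k : ZMod n) (s : ZMod 4) :
    ∃ u ∈ D, (u.1 = k ∧ rowParity u.2 = rowParity s + 1) ∨
      (u.2 = s ∧ (u.1 = k - 1 ∨ u.1 = k + 1)) := by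
  obtain ⟨u, huD, hadj⟩ := hD (k, s)
  refine ⟨u, huD, ?_⟩
  rcases torusGraph_adj_mk_cases hadj with ⟨hk, hs | hs⟩ | horiz
  · exact .inl ⟨hk, hs ▸ rowParity_add_one s⟩
  · exact .inl ⟨hk, hs ▸ rowParity_sub_one s⟩
  · exact .inr horiz

noncomputable def halfColumnCount {n : ℕ} (D : Set (ZMod n × ZMod 4)) (k : ZMod n) (p : ZMod 2) : ℕ :=
  {v ∈ D | v.1 = k ∧ rowParity v.2 = p}.ncard

variable {n : ℕ} [NeZero n]

lemma ncard_column_eq (D : Set (ZMod n × ZMod 4)) (k : ZMod n) :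
    {v ∈ D | v.1 = k}.ncard = halfColumnCount D k 0 + halfColumnCount D k 1 := by
  have hsplit : {v ∈ D | v.1 = k} =
      {v ∈ D | (v.1 = k ∧ rowParity v.2 = 0) ∨ (v.1 = k ∧ rowParity v.2 = 1)} := by
    ext v
    have : ∀ p : ZMod 2, p = 0 ∨ p = 1 := by decide
    have := this (rowParity v.2)
    simp only [Set.mem_ofPred_eq, ← and_or_left]
    tauto
  rw [hsplit, Set.ncard_sep_or_of_disjoint]
  · rfl
  · rintro v ⟨-, h0⟩ ⟨-, h1⟩
    exact zero_ne_one (h0.symm.trans h1)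

lemma halfColumnCount_dominated {D : Set (ZMod n × ZMod 4)}
    (hD : IsTotalDomSet (torusGraph n 4) D) (k : ZMod n) (p : ZMod 2) :
    1 ≤ halfColumnCount D k (p + 1) ∨
      2 ≤ halfColumnCount D (k - 1) p + halfColumnCount D (k + 1) p := by
  obtain ⟨r, rfl⟩ := ZMod.ringHom_surjective rowParity p
  have hcol : ∀ u ∈ D, u.1 = k → rowParity u.2 = rowParity r + 1 →
      1 ≤ halfColumnCount D k (rowParity r + 1) := fun u hu hk hp =>
    (Set.ncard_pos).2 ⟨u, hu, hk, hp⟩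
  obtain ⟨u, hu, ⟨huk, hup⟩ | ⟨hur, huk⟩⟩ := hD.exists_torus_dominator k r
  · exact .inl (hcol u hu huk hup)
  have hr2 : rowParity (r + 2) = rowParity r := by
    rw [map_add, add_eq_left]; rfl
  obtain ⟨w, hw, ⟨hwk, hwp⟩ | ⟨hwr, hwk⟩⟩ := hD.exists_torus_dominator k (r + 2)
  · exact .inl (hcol w hw hwk (hwp.trans (by rw [hr2])))
  right
  have huw : u ≠ w := fun h => by
    have : r = r + 2 := hur.symm.trans (h ▸ hwr)
    exact absurd (add_eq_left.1 this.symm) (by decide)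
  calc 2 = ({u, w} : Set _).ncard := (Set.ncard_pair huw).symm
    _ ≤ ({v ∈ D | v.1 = k - 1 ∧ rowParity v.2 = rowParity r} ∪
          {v ∈ D | v.1 = k + 1 ∧ rowParity v.2 = rowParity r}).ncard := by
      refine Set.ncard_le_ncard ?_
      rintro v (rfl | rfl)
      · rcases huk with h | h
        · exact .inl ⟨hu, h, by rw [hur]⟩
        · exact .inr ⟨hu, h, by rw [hur]⟩
      · rcases hwk with h | h
        · exact .inl ⟨hw, h, by rw [hwr, hr2]⟩
        · exact .inr ⟨hw, h, by rw [hwr, hr2]⟩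
    _ ≤ _ := Set.ncard_union_le _ _

lemma ncard_window_eq (hn : 4 ≤ n) (D : Set (ZMod n × ZMod 4)) (i : ZMod n) :
    {v ∈ D | v.1 = i ∨ v.1 = i + 1 ∨ v.1 = i + 2 ∨ v.1 = i + 3}.ncard =
      {v ∈ D | v.1 = i}.ncard + {v ∈ D | v.1 = i + 1}.ncard +
        {v ∈ D | v.1 = i + 2}.ncard + {v ∈ D | v.1 = i + 3}.ncard := by
  have hne : ∀ a b : ℕ, a < b → b < 4 → i + a ≠ i + b := by
    intro a b hab hb h
    have := (ZMod.natCast_eq_natCast_iff' a b n).1 (add_left_cancel h)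
    rw [Nat.mod_eq_of_lt (by omega), Nat.mod_eq_of_lt (by omega)] at this
    omega
  have h01 := hne 0 1; have h02 := hne 0 2; have h03 := hne 0 3
  have h12 := hne 1 2; have h13 := hne 1 3; have h23 := hne 2 3
  push_cast at h01 h02 h03 h12 h13 h23
  rw [Set.ncard_sep_or_of_disjoint, Set.ncard_sep_or_of_disjoint, Set.ncard_sep_or_of_disjoint]
  · omega
  all_goals
    rintro v h h'
    simp_all

theorem stmt7 (n : ℕ) (hn : 5 ≤ n) (D : Set (ZMod n × ZMod 4))
    (hD : IsTotalDomSet (torusGraph n 4) D) :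
    ∀ i : ZMod n,
      4 ≤ {v ∈ D | v.1 = i ∨ v.1 = i + 1 ∨ v.1 = i + 2 ∨ v.1 = i + 3}.ncard := by
  intro i
  have : NeZero n := ⟨by omega⟩
  have h1 : i + 1 - 1 = i := by ring
  have h2 : i + 1 + 1 = i + 2 := by ring
  have h3 : i + 2 - 1 = i + 1 := by ring
  have h4 : i + 2 + 1 = i + 3 := by ring
  have h5 : (1 : ZMod 2) + 1 = 0 := rfl
  have c10 := halfColumnCount_dominated hD (i + 1) 0
  have c11 := halfColumnCount_dominated hD (i + 1) 1
  have c20 := halfColumnCount_dominated hD (i + 2) 0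
  have c21 := halfColumnCount_dominated hD (i + 2) 1
  rw [h1, h2, zero_add] at c10
  rw [h1, h2, h5] at c11
  rw [h3, h4, zero_add] at c20
  rw [h3, h4, h5] at c21
  rw [ncard_window_eq (by omega), ncard_column_eq, ncard_column_eq, ncard_column_eq,
    ncard_column_eq]
  omega
end

section
/- For all n ≥ 3 and m ≥ 3, the total domination number satisfies γ_t(C_n × C_m) ≤ γ_t(C_{n+1} × C_m). -/
/-!
Write `C_k × C_m` as `C_k □ H` with `H = C_m`. Contracting the cycle edge between columns `-1`
and `0` of `C_{n+1} □ H` is the map `(x, w) ↦ (x.cast, w)` onto `C_n □ H` (`ZMod.cast` sends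
`-1 = n` to `0`); it keeps every other pair of adjacent vertices adjacent. Hence the image of a
total dominating set `D` dominates everything, except possibly a merged vertex `(0, w)` whose
only neighbours in `D` were `(-1, w)` and `(0, w)` themselves. In that case both lie in `D`, and
sending `(-1, w)` to `(1, w)` instead repairs this without making the image larger than `D`.
-/

open SimpleGraph

def zmodCycle (k : ℕ) : SimpleGraph (ZMod k) :=
  SimpleGraph.fromRel fun a b => b = a + 1

theorem zmodCycle_adj {k : ℕ} {a b : ZMod k} :
    (zmodCycle k).Adj a b ↔ a ≠ b ∧ (b = a + 1 ∨ a = b + 1) :=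
  fromRel_adj _ _ _

theorem zmodCycle_adj_add_one {k : ℕ} [Fact (1 < k)] (a : ZMod k) :
    (zmodCycle k).Adj a (a + 1) :=
  zmodCycle_adj.2 ⟨by simp, Or.inl rfl⟩

theorem torusGraph_eq_boxProd (n m : ℕ) : torusGraph n m = zmodCycle n □ zmodCycle m := by
  ext ⟨a₁, a₂⟩ ⟨b₁, b₂⟩
  simp only [torusGraph, boxProd_adj, zmodCycle_adj, ne_eq, Prod.mk.injEq]
  grind

theorem totalDomNum_le_of_forall_exists {V V' : Type*} {G : SimpleGraph V}
    {G' : SimpleGraph V'} (hG : ∃ D, IsTotalDomSet G D)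
    (h : ∀ D, IsTotalDomSet G D → ∃ D', IsTotalDomSet G' D' ∧ D'.ncard ≤ D.ncard) :
    totalDomNum G' ≤ totalDomNum G := by
  obtain ⟨D₀, hD₀⟩ := hG
  have hne : {k | ∃ D, IsTotalDomSet G D ∧ D.ncard = k}.Nonempty := ⟨_, D₀, hD₀, rfl⟩
  obtain ⟨D, hD, hcard⟩ := Nat.sInf_mem hne
  obtain ⟨D', hD', hle⟩ := h D hD
  calc totalDomNum G' ≤ D'.ncard := Nat.sInf_le ⟨D', hD', rfl⟩
    _ ≤ D.ncard := hle
    _ = totalDomNum G := hcard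

namespace ZMod

variable {n : ℕ}

theorem cast_succ_add_one [NeZero n] {x : ZMod (n + 1)} (hx : x ≠ -1) :
    (cast (x + 1) : ZMod n) = cast x + 1 := by
  have hlt : x.val + 1 < n + 1 := by
    have : x.val ≠ n := fun h => hx (val_injective _ (h.trans (val_neg_one n).symm))
    have := x.val_lt
    omega
  have h1 : 1 % (n + 1) = 1 := Nat.mod_eq_of_lt (by have := NeZero.ne n; omega)
  rw [cast_eq_val, cast_eq_val, val_add, val_one_eq_one_mod, h1, Nat.mod_eq_of_lt hlt,
    Nat.cast_add_one]

theorem cast_succ_neg_one : (cast (-1 : ZMod (n + 1)) : ZMod n) = 0 := by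
  rw [cast_eq_val, val_neg_one, natCast_self]

theorem cast_succ_surjective [NeZero n] : Function.Surjective (cast : ZMod (n + 1) → ZMod n) :=
  fun a => ⟨cast a, cast_cast_zmod_of_le (Nat.le_succ n) a⟩

end ZMod

theorem zmodCycle_adj_cast {n : ℕ} [Fact (1 < n)] {x y : ZMod (n + 1)}
    (h : (zmodCycle (n + 1)).Adj x y) :
    (zmodCycle n).Adj (ZMod.cast x) (ZMod.cast y) ∨ x = -1 ∧ y = 0 ∨ x = 0 ∧ y = -1 := by
  have step : ∀ x : ZMod (n + 1),
      (zmodCycle n).Adj (ZMod.cast x) (ZMod.cast (x + 1)) ∨ x = -1 := by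
    intro x
    by_cases hx : x = -1
    · exact Or.inr hx
    · rw [ZMod.cast_succ_add_one hx]
      exact Or.inl (zmodCycle_adj_add_one _)
  rcases (zmodCycle_adj.1 h).2 with rfl | rfl
  · rcases step x with hadj | rfl
    · exact Or.inl hadj
    · exact Or.inr (Or.inl ⟨rfl, neg_add_cancel 1⟩)
  · rcases step y with hadj | rfl
    · exact Or.inl hadj.symm
    · exact Or.inr (Or.inr ⟨neg_add_cancel 1, rfl⟩)

section Contraction

variable {n : ℕ} {W : Type*}

def castFst (p : ZMod (n + 1) × W) : ZMod n × W := (ZMod.cast p.1, p.2)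

theorem castFst_surjective [NeZero n] :
    Function.Surjective (castFst : ZMod (n + 1) × W → ZMod n × W) :=
  fun ⟨a, w⟩ =>
    let ⟨x, hx⟩ := ZMod.cast_succ_surjective a
    ⟨(x, w), by rw [castFst, hx]⟩

theorem boxProd_adj_castFst [Fact (1 < n)] (H : SimpleGraph W) {p q : ZMod (n + 1) × W}
    (h : (zmodCycle (n + 1) □ H).Adj p q) :
    (zmodCycle n □ H).Adj (castFst p) (castFst q) ∨
      p.2 = q.2 ∧ (p.1 = -1 ∧ q.1 = 0 ∨ p.1 = 0 ∧ q.1 = -1) := by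
  rcases boxProd_adj.1 h with ⟨h₁, h₂⟩ | ⟨h₂, h₁⟩
  · rcases zmodCycle_adj_cast h₁ with hadj | hcol
    · exact Or.inl (boxProd_adj.2 (Or.inl ⟨hadj, h₂⟩))
    · exact Or.inr ⟨h₂, hcol⟩
  · exact Or.inl (boxProd_adj.2 (Or.inr ⟨h₂, congrArg ZMod.cast h₁⟩))

open Classical in
noncomputable def castFstAvoiding (D : Set (ZMod (n + 1) × W)) (p : ZMod (n + 1) × W) :
    ZMod n × W :=
  if p.1 = -1 ∧ (0, p.2) ∈ D then (1, p.2) else castFst p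

theorem castFst_mem_image_castFstAvoiding [NeZero n] {D : Set (ZMod (n + 1) × W)}
    {p : ZMod (n + 1) × W} (hp : p ∈ D) : castFst p ∈ castFstAvoiding D '' D := by
  by_cases h : p.1 = -1 ∧ (0, p.2) ∈ D
  · refine ⟨(0, p.2), h.2, ?_⟩
    have h0 : (0 : ZMod (n + 1)) ≠ -1 := fun h => NeZero.ne n (by
      simpa [ZMod.val_neg_one] using (congrArg ZMod.val h).symm)
    simp [castFstAvoiding, castFst, h0, h.1, ZMod.cast_succ_neg_one]
  · exact ⟨p, hp, if_neg h⟩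

theorem one_mem_image_castFstAvoiding {D : Set (ZMod (n + 1) × W)} {w : W}
    (h₁ : (-1, w) ∈ D) (h₀ : (0, w) ∈ D) : (1, w) ∈ castFstAvoiding D '' D :=
  ⟨_, h₁, if_pos ⟨rfl, h₀⟩⟩

theorem exists_adj_castFst_of_mem [Fact (1 < n)] (H : SimpleGraph W)
    {D : Set (ZMod (n + 1) × W)} (hD : IsTotalDomSet (zmodCycle (n + 1) □ H) D)
    {q : ZMod (n + 1) × W} (hq : q ∈ D) :
    ∃ u ∈ castFstAvoiding D '' D, (zmodCycle n □ H).Adj (castFst q) u := by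
  obtain ⟨x, w⟩ := q
  obtain ⟨⟨y, w'⟩, hv, hadj⟩ := hD (x, w)
  rcases boxProd_adj_castFst H hadj with hadj | ⟨hw, hcol⟩
  · exact ⟨_, castFst_mem_image_castFstAvoiding hv, hadj⟩
  obtain rfl : w = w' := hw
  change x = -1 ∧ y = 0 ∨ x = 0 ∧ y = -1 at hcol
  have hx : ZMod.cast x = (0 : ZMod n) := by
    rcases hcol with ⟨rfl, -⟩ | ⟨rfl, -⟩
    · exact ZMod.cast_succ_neg_one
    · exact ZMod.cast_zero
  refine ⟨(1, w), ?_, ?_⟩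
  · rcases hcol with ⟨rfl, rfl⟩ | ⟨rfl, rfl⟩
    · exact one_mem_image_castFstAvoiding hq hv
    · exact one_mem_image_castFstAvoiding hv hq
  · rw [castFst, hx]
    exact boxProd_adj_left.2 (by simpa using zmodCycle_adj_add_one (0 : ZMod n))

theorem isTotalDomSet_image_castFstAvoiding [Fact (1 < n)] (H : SimpleGraph W)
    {D : Set (ZMod (n + 1) × W)} (hD : IsTotalDomSet (zmodCycle (n + 1) □ H) D) :
    IsTotalDomSet (zmodCycle n □ H) (castFstAvoiding D '' D) := by
  intro y
  obtain ⟨p, rfl⟩ := castFst_surjective y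
  obtain ⟨q, hq, hadj⟩ := hD p
  rcases boxProd_adj_castFst H hadj with hadj | ⟨hw, hcol⟩
  · exact ⟨_, castFst_mem_image_castFstAvoiding hq, hadj⟩
  · have hpq : castFst p = castFst q := by
      rcases hcol with ⟨h₁, h₀⟩ | ⟨h₀, h₁⟩ <;>
        simp [castFst, h₁, h₀, hw, ZMod.cast_succ_neg_one]
    exact hpq ▸ exists_adj_castFst_of_mem H hD hq

theorem totalDomNum_boxProd_zmodCycle_le [Finite W] (H : SimpleGraph W) (hn : 2 ≤ n) :
    totalDomNum (zmodCycle n □ H) ≤ totalDomNum (zmodCycle (n + 1) □ H) := by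
  have : Fact (1 < n) := ⟨hn⟩
  have : Fact (1 < n + 1) := ⟨by omega⟩
  refine totalDomNum_le_of_forall_exists ⟨Set.univ, fun p => ⟨(p.1 + 1, p.2), trivial, ?_⟩⟩
    fun D hD => ⟨_, isTotalDomSet_image_castFstAvoiding H hD, Set.ncard_image_le D.toFinite⟩
  exact boxProd_adj_left.2 (zmodCycle_adj_add_one _)

end Contraction

theorem stmt11 (n m : ℕ) (hn : 3 ≤ n) (hm : 3 ≤ m) :
    totalDomNum (torusGraph n m) ≤ totalDomNum (torusGraph (n + 1) m) := by
  have : NeZero m := ⟨by omega⟩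
  rw [torusGraph_eq_boxProd, torusGraph_eq_boxProd]
  exact totalDomNum_boxProd_zmodCycle_le _ (by omega)
end

section
/- For all n, m ≥ 3, the paired domination number of C_n × C_m is at most 4⌈n/4⌉⌈m/4⌉. -/
open SimpleGraph

/-!
On a torus `C_N × C_M` with `4 ∣ N` and `4 ∣ M`, the vertices `(x, y)` with `x ≡ 0, 1` and
`y ≡ 0`, or `x ≡ 2, 3` and `y ≡ 2 (mod 4)`, form a paired dominating set of size `NM / 4`:
`(x, y)` is paired with `(x + 1, y)` or `(x - 1, y)`, and both domination and pairing only
depend on residues mod 4, so they are checked on the `4 × 4` torus.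

For `n ≤ N < n + 4` fold `C_N` onto `C_n` by walking once around `C_n` and standing still
`N - n` times. Such a fold maps adjacent vertices to adjacent or equal ones, so the image of a
dominating set under the surjection `C_N × C_M → C_n × C_m` dominates, and the pairing survives
wherever the fold is injective on the set. The pauses can be placed so that two identified
vertices always have residues summing to `3` mod 4, and no two distinct points of the pattern
have coordinates that are equal or sum to `3` in both directions.
-/

section PairedDomination

variable {V W : Type*} {G : SimpleGraph V} {H : SimpleGraph W}

lemma IsDomSet.image {D : Set V} (hD : IsDomSet G D) {f : V → W}
    (hf : ∀ a b, G.Adj a b → f a = f b ∨ H.Adj (f a) (f b)) (hsurj : Function.Surjective f) :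
    IsDomSet H (f '' D) := by
  intro w hw
  obtain ⟨v, rfl⟩ := hsurj w
  obtain ⟨u, hu, hvu⟩ := hD v fun hv => hw ⟨v, hv, rfl⟩
  exact ⟨f u, ⟨u, hu, rfl⟩, (hf v u hvu).resolve_left fun h => hw ⟨u, hu, h.symm⟩⟩

lemma IsDomSet.isPairedDomSet_of_involution {D : Set V} (hD : IsDomSet G D) {p : V → V}
    (hp : ∀ v ∈ D, p v ∈ D ∧ G.Adj v (p v) ∧ p (p v) = v) : IsPairedDomSet G D := by
  refine ⟨hD, ?_⟩
  let M : (G.induce D).Subgraph :=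
    { verts := Set.univ
      Adj := fun a b => b.1 = p a.1
      adj_sub := fun {a b} h => by simpa [h] using (hp a a.2).2.1
      edge_vert := fun _ => trivial
      symm := ⟨fun a b h => by simp [h, (hp a a.2).2.2]⟩ }
  refine ⟨M, ?_⟩
  rw [Subgraph.isPerfectMatching_iff]
  exact fun v => ⟨⟨p v, (hp v v.2).1⟩, rfl, fun w hw => Subtype.ext hw⟩

lemma IsDomSet.isPairedDomSet_image_of_involution {D : Set V} (hD : IsDomSet G D) {p : V → V}
    (hp : ∀ v ∈ D, p v ∈ D ∧ G.Adj v (p v) ∧ p (p v) = v) {f : V → W}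
    (hf : ∀ a b, G.Adj a b → f a = f b ∨ H.Adj (f a) (f b)) (hsurj : Function.Surjective f)
    (hinj : Set.InjOn f D) : IsPairedDomSet H (f '' D) := by
  classical
  let q : W → W := fun w => if h : ∃ v ∈ D, f v = w then f (p h.choose) else w
  have hq : ∀ v ∈ D, q (f v) = f (p v) := fun v hv => by
    have h : ∃ u ∈ D, f u = f v := ⟨v, hv, rfl⟩
    simp only [q, dif_pos h, hinj h.choose_spec.1 hv h.choose_spec.2]
  refine (hD.image hf hsurj).isPairedDomSet_of_involution (p := q) ?_
  rintro _ ⟨v, hv, rfl⟩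
  obtain ⟨hpv, hadj, hppv⟩ := hp v hv
  refine ⟨⟨p v, hpv, (hq v hv).symm⟩, ?_, by rw [hq v hv, hq _ hpv, hppv]⟩
  rw [hq v hv]
  exact (hf v (p v) hadj).resolve_left fun h => hadj.ne (hinj hv hpv h)

end PairedDomination

section Torus

variable {n m : ℕ}

def unitSteps (n m : ℕ) : Finset (ZMod n × ZMod m) := {(1, 0), -(1, 0), (0, 1), -(0, 1)}

lemma torusGraph_adj_of_sub_mem_unitSteps {v w : ZMod n × ZMod m} (hne : v ≠ w)
    (h : w - v ∈ unitSteps n m) : (torusGraph n m).Adj v w := by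
  refine ⟨hne, ?_⟩
  obtain ⟨v1, v2⟩ := v
  obtain ⟨w1, w2⟩ := w
  simp only [unitSteps, Prod.neg_mk, neg_zero, Finset.mem_insert, Finset.mem_singleton,
    Prod.mk_sub_mk, Prod.mk.injEq, sub_eq_iff_eq_add] at h
  rcases h with ⟨rfl, rfl⟩ | ⟨rfl, rfl⟩ | ⟨rfl, rfl⟩ | ⟨rfl, rfl⟩
  · exact Or.inr ⟨(zero_add _).symm, Or.inr (add_comm _ _)⟩
  · exact Or.inr ⟨(zero_add _).symm, Or.inl (by ring)⟩
  · exact Or.inl ⟨(zero_add _).symm, Or.inr (add_comm _ _)⟩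
  · exact Or.inl ⟨(zero_add _).symm, Or.inl (by ring)⟩

lemma torusGraph_adj_prodMap {n' m' : ℕ} {f : ZMod n' → ZMod n} {g : ZMod m' → ZMod m}
    (hf : ∀ x, f (x + 1) = f x ∨ f (x + 1) = f x + 1)
    (hg : ∀ y, g (y + 1) = g y ∨ g (y + 1) = g y + 1) {a b : ZMod n' × ZMod m'}
    (h : (torusGraph n' m').Adj a b) :
    Prod.map f g a = Prod.map f g b ∨ (torusGraph n m).Adj (Prod.map f g a) (Prod.map f g b) := by
  by_cases heq : Prod.map f g a = Prod.map f g b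
  · exact Or.inl heq
  refine Or.inr ⟨heq, ?_⟩
  obtain ⟨a1, a2⟩ := a
  obtain ⟨b1, b2⟩ := b
  simp only [Prod.map, Prod.mk.injEq] at heq ⊢
  obtain ⟨-, h⟩ := h
  simp only at h
  rcases h with ⟨rfl, rfl | rfl⟩ | ⟨rfl, rfl | rfl⟩
  · rcases hg b2 with h | h <;> simp_all
  · rcases hg a2 with h | h <;> simp_all
  · rcases hf b1 with h | h <;> simp_all
  · rcases hf a1 with h | h <;> simp_all

end Torus

def mateSign {R : Type*} [Ring R] (c : ZMod 4) : R :=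
  if c ∈ ({0, 2} : Finset (ZMod 4)) then 1 else -1

lemma map_mateSign {R S : Type*} [Ring R] [Ring S] (f : R →+* S) (c : ZMod 4) :
    f (mateSign c) = mateSign c := by
  unfold mateSign
  split_ifs <;> simp

lemma mateSign_add_mateSign {R : Type*} [Ring R] (c : ZMod 4) :
    (mateSign (c + mateSign c) : R) = -mateSign c := by
  unfold mateSign
  split_ifs with h1 h2 h2
  · exfalso; revert h1 h2; revert c; decide
  · rfl
  · rw [neg_neg]
  · exfalso; revert h1 h2; revert c; decide

section Tile

variable {N M : ℕ} (hN : 4 ∣ N) (hM : 4 ∣ M)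

def residueHom : ZMod N × ZMod M →+ ZMod 4 × ZMod 4 :=
  (ZMod.castHom hN (ZMod 4)).toAddMonoidHom.prodMap (ZMod.castHom hM (ZMod 4)).toAddMonoidHom

def tile : Finset (ZMod 4 × ZMod 4) := {(0, 0), (1, 0), (2, 2), (3, 2)}

def tilePattern : Set (ZMod N × ZMod M) := residueHom hN hM ⁻¹' tile

def tileMate (v : ZMod N × ZMod M) : ZMod N × ZMod M :=
  v + (mateSign (residueHom hN hM v).1, 0)

lemma residueHom_surjective : Function.Surjective (residueHom hN hM) := by
  rw [residueHom, AddMonoidHom.coe_prodMap]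
  exact (ZMod.ringHom_surjective _).prodMap (ZMod.ringHom_surjective _)

lemma residueHom_apply (v : ZMod N × ZMod M) :
    residueHom hN hM v = (ZMod.castHom hN (ZMod 4) v.1, ZMod.castHom hM (ZMod 4) v.2) :=
  rfl

lemma residueHom_unitSteps : (unitSteps N M).image (residueHom hN hM) = unitSteps 4 4 := by
  simp only [unitSteps, Finset.image_insert, Finset.image_singleton, map_neg, residueHom_apply,
    map_one, map_zero]

lemma tilePattern_isDomSet : IsDomSet (torusGraph N M) (tilePattern hN hM) := by
  intro v hv
  have hdom : ∀ u ∉ tile, ∃ e ∈ unitSteps 4 4, u + e ∈ tile := by decide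
  obtain ⟨e4, he4, hmem⟩ := hdom _ hv
  rw [← residueHom_unitSteps hN hM, Finset.mem_image] at he4
  obtain ⟨e, he, rfl⟩ := he4
  have hve : v + e ∈ tilePattern hN hM := by simpa [tilePattern] using hmem
  refine ⟨v + e, hve, torusGraph_adj_of_sub_mem_unitSteps (fun h => hv (h ▸ hve)) ?_⟩
  rwa [add_sub_cancel_left]

lemma residueHom_tileMate (v : ZMod N × ZMod M) :
    residueHom hN hM (tileMate hN hM v) =
      residueHom hN hM v + (mateSign (residueHom hN hM v).1, 0) := by
  rw [tileMate, map_add, residueHom_apply hN hM (mateSign _, 0), map_mateSign, map_zero]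

lemma tileMate_spec {v : ZMod N × ZMod M} (hv : v ∈ tilePattern hN hM) :
    tileMate hN hM v ∈ tilePattern hN hM ∧ (torusGraph N M).Adj v (tileMate hN hM v) ∧
      tileMate hN hM (tileMate hN hM v) = v := by
  have hmate : ∀ u ∈ tile, u + (mateSign u.1, 0) ∈ tile ∧ u + (mateSign u.1, 0) ≠ u := by
    decide
  have hρ := residueHom_tileMate hN hM v
  obtain ⟨hmem, hne⟩ := hmate _ hv
  rw [← hρ] at hmem hne
  refine ⟨hmem, torusGraph_adj_of_sub_mem_unitSteps (fun h => hne (h ▸ rfl)) ?_, ?_⟩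
  · rw [tileMate, add_sub_cancel_left]
    unfold mateSign
    split_ifs <;> simp [unitSteps]
  · nth_rewrite 1 [tileMate]
    rw [hρ, Prod.fst_add, mateSign_add_mateSign, tileMate]
    simp [add_assoc]

open Finset in
lemma four_mul_ncard_tilePattern [NeZero N] [NeZero M] :
    4 * (tilePattern hN hM).ncard = N * M := by
  classical
  set ρ := residueHom hN hM
  have hfib (u) : #{v | ρ v = u} = #{v | ρ v = 0} :=
    AddMonoidHom.card_fiber_eq_of_mem_range ρ (residueHom_surjective hN hM u)
      (residueHom_surjective hN hM 0)
  have hpat : (tilePattern hN hM).ncard = ∑ u ∈ tile, #{v | ρ v = u} := by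
    rw [Finset.sum_card_fiberwise_eq_card_filter, ← Set.ncard_coe_finset]
    congr 1
    ext v
    simp [tilePattern, ρ]
  have huniv : N * M = ∑ u : ZMod 4 × ZMod 4, #{v | ρ v = u} := by
    rw [Finset.sum_card_fiberwise_eq_card_filter]
    simp
  simp only [hfib, Finset.sum_const, smul_eq_mul] at hpat huniv
  have htile : #tile = 4 := rfl
  rw [hpat, huniv, htile, card_univ, Fintype.card_prod, ZMod.card]
  ring

end Tile

section Fold

/-- For `n ≤ N < n + 4`, `x ↦ cycleFold N n x` walks once around `C_n` in `N` steps: it stands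
still on the `N - n - 1` steps into `N - 2, N - 4, …` and, if `N > n`, on the wrap-around step
from `N - 1` to `0`. -/
def cycleFold (N n x : ℕ) : ℕ := x - (x + N - 2 * n) / 2

def foldMap (N n : ℕ) (x : ZMod N) : ZMod n := (cycleFold N n x.val : ZMod n)

lemma ZMod.eq_or_add_eq_of_natCast_eq {n a b : ℕ} (ha : a ≤ n) (hb : b ≤ n)
    (h : (a : ZMod n) = b) : a = b ∨ a + b = n ∧ (a = 0 ∨ b = 0) := by
  rw [ZMod.natCast_eq_natCast_iff'] at h
  rcases ha.lt_or_eq with ha | rfl <;> rcases hb.lt_or_eq with hb | rfl <;>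
    simp only [Nat.mod_eq_of_lt, Nat.mod_self, *] at h <;> omega

variable {N n : ℕ}

lemma foldMap_add_one (hn : 2 ≤ n) (hnN : n ≤ N) (hN : N < n + 4) (x : ZMod N) :
    foldMap N n (x + 1) = foldMap N n x ∨ foldMap N n (x + 1) = foldMap N n x + 1 := by
  have : NeZero N := ⟨by omega⟩
  have hx := x.val_lt
  have hval : (x + 1).val = (x.val + 1) % N := by
    rw [ZMod.val_add, ZMod.val_one_eq_one_mod, Nat.mod_eq_of_lt (by omega : 1 < N)]
  simp only [foldMap, hval]
  rcases (by omega : x.val + 1 < N ∨ x.val + 1 = N) with hlt | heq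
  · rw [Nat.mod_eq_of_lt hlt]
    rcases (by unfold cycleFold; omega : cycleFold N n (x.val + 1) = cycleFold N n x.val ∨
      cycleFold N n (x.val + 1) = cycleFold N n x.val + 1) with h | h
    · exact Or.inl (by rw [h])
    · exact Or.inr (by rw [h, Nat.cast_succ])
  · rw [heq, Nat.mod_self, show x.val = N - 1 by omega, show cycleFold N n 0 = 0 by
      unfold cycleFold; omega, Nat.cast_zero]
    rcases (by unfold cycleFold; omega : cycleFold N n (N - 1) = n ∨
      cycleFold N n (N - 1) + 1 = n) with h | h
    · exact Or.inl (by rw [h, ZMod.natCast_self])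
    · exact Or.inr (by rw [← Nat.cast_add_one, h, ZMod.natCast_self])

lemma foldMap_surjective (hn : 2 ≤ n) (hnN : n ≤ N) (hN : N < n + 4) :
    Function.Surjective (foldMap N n) := by
  have : NeZero n := ⟨by omega⟩
  intro y
  have hy := y.val_lt
  refine ⟨((y.val + (y.val + N + 1 - 2 * n) / 2 : ℕ) : ZMod N), ?_⟩
  rw [foldMap, ZMod.val_cast_of_lt (by omega),
    show cycleFold N n _ = y.val by unfold cycleFold; omega, ZMod.natCast_zmod_val]

lemma foldMap_eq_foldMap (hn : 2 ≤ n) (hnN : n ≤ N) (hN : N < n + 4) (h4 : 4 ∣ N)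
    {x x' : ZMod N} (h : foldMap N n x = foldMap N n x') :
    x = x' ∨ ZMod.castHom h4 (ZMod 4) x + ZMod.castHom h4 (ZMod 4) x' = 3 := by
  have : NeZero N := ⟨by omega⟩
  have hx := x.val_lt
  have hx' := x'.val_lt
  have hle : ∀ k < N, cycleFold N n k ≤ n := fun k hk => by unfold cycleFold; omega
  have hk := ZMod.eq_or_add_eq_of_natCast_eq (hle _ hx) (hle _ hx') h
  unfold cycleFold at hk
  rcases (by omega : x.val = x'.val ∨ (x.val + x'.val) % 4 = 3) with h1 | h3
  · exact Or.inl (ZMod.val_injective N h1)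
  · right
    rw [ZMod.castHom_apply, ZMod.castHom_apply, ZMod.cast_eq_val, ZMod.cast_eq_val,
      ← Nat.cast_add, ← ZMod.natCast_mod, h3]
    rfl

end Fold

lemma tilePattern_injOn_foldMap {N M n m : ℕ} (hN : 4 ∣ N) (hM : 4 ∣ M)
    (hn : 2 ≤ n) (hnN : n ≤ N) (hNn : N < n + 4)
    (hm : 2 ≤ m) (hmM : m ≤ M) (hMm : M < m + 4) :
    Set.InjOn (Prod.map (foldMap N n) (foldMap M m)) (tilePattern hN hM) := by
  intro v hv w hw h
  simp only [Prod.map, Prod.mk.injEq] at h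
  have htile : ∀ u ∈ tile, ∀ u' ∈ tile,
      (u.1 = u'.1 ∨ u.1 + u'.1 = 3) → (u.2 = u'.2 ∨ u.2 + u'.2 = 3) → u = u' := by decide
  have hdouble : ∀ c : ZMod 4, c + c ≠ 3 := by decide
  have h1 := foldMap_eq_foldMap hn hnN hNn hN h.1
  have h2 := foldMap_eq_foldMap hm hmM hMm hM h.2
  have hρ := htile _ hv _ hw (h1.imp (congrArg (ZMod.castHom hN (ZMod 4))) id)
    (h2.imp (congrArg (ZMod.castHom hM (ZMod 4))) id)
  rw [residueHom_apply, residueHom_apply, Prod.mk.injEq] at hρ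
  refine Prod.ext (h1.resolve_right ?_) (h2.resolve_right ?_)
  · rw [hρ.1]; exact hdouble _
  · rw [hρ.2]; exact hdouble _

theorem four_mul_pairedDomNum_torusGraph_le {n m N M : ℕ} (hN : 4 ∣ N) (hM : 4 ∣ M)
    (hn : 2 ≤ n) (hnN : n ≤ N) (hNn : N < n + 4)
    (hm : 2 ≤ m) (hmM : m ≤ M) (hMm : M < m + 4) :
    4 * pairedDomNum (torusGraph n m) ≤ N * M := by
  have : NeZero N := ⟨by omega⟩
  have : NeZero M := ⟨by omega⟩
  have hinj := tilePattern_injOn_foldMap hN hM hn hnN hNn hm hmM hMm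
  have hpaired : IsPairedDomSet (torusGraph n m)
      (Prod.map (foldMap N n) (foldMap M m) '' tilePattern hN hM) :=
    (tilePattern_isDomSet hN hM).isPairedDomSet_image_of_involution
      (fun _ => tileMate_spec hN hM)
      (fun _ _ => torusGraph_adj_prodMap (foldMap_add_one hn hnN hNn) (foldMap_add_one hm hmM hMm))
      ((foldMap_surjective hn hnN hNn).prodMap (foldMap_surjective hm hmM hMm)) hinj
  rw [← four_mul_ncard_tilePattern hN hM, ← hinj.ncard_image]
  exact Nat.mul_le_mul_left 4 (Nat.sInf_le ⟨_, hpaired, rfl⟩)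

theorem stmt13 (n m : ℕ) (hn : 3 ≤ n) (hm : 3 ≤ m) :
    pairedDomNum (torusGraph n m) ≤ 4 * ((n + 3) / 4) * ((m + 3) / 4) := by
  have h := four_mul_pairedDomNum_torusGraph_le (n := n) (m := m) (dvd_mul_right 4 ((n + 3) / 4))
    (dvd_mul_right 4 ((m + 3) / 4)) (by omega) (by omega) (by omega) (by omega) (by omega)
    (by omega)
  linarith
end
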